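/- For ℓ > 0 define X(ℓ) = (2π/ℓ)·(π/2 − arctan(sinh(ℓ/2))). Then for every ℓ with 0 < ℓ < 2·arsinh(1), one has X(ℓ) > π²/(4·arsinh(1)). -/

import Mathlib

/-!
Since `sinh (arsinh 1) = 1` and `arctan 1 = π / 4`, monotonicity gives `arctan (sinh (ℓ / 2)) < π / 4`
for `ℓ / 2 < arsinh 1`, hence `X(ℓ) > (2π / ℓ) · (π / 4) = π² / (2ℓ)`, which exceeds
`π² / (4 · arsinh 1)` because `ℓ < 2 · arsinh 1`.
-/

/-- Half-length of the hyperbolic collar around a geodesic of length `ℓ`. -/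
noncomputable def collarX (ℓ : ℝ) : ℝ :=
  2 * Real.pi / ℓ * (Real.pi / 2 - Real.arctan (Real.sinh (ℓ / 2)))

open Real

theorem arctan_sinh_lt_pi_div_four {t : ℝ} (ht : t < arsinh 1) : arctan (sinh t) < π / 4 := by
  simpa only [sinh_arsinh, arctan_one] using arctan_strictMono (sinh_strictMono ht)

theorem pi_sq_div_two_mul_lt_collarX {ℓ : ℝ} (h0 : 0 < ℓ) (h1 : ℓ < 2 * arsinh 1) :
    π ^ 2 / (2 * ℓ) < collarX ℓ := by
  have harctan : arctan (sinh (ℓ / 2)) < π / 4 := arctan_sinh_lt_pi_div_four (by linarith)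
  calc π ^ 2 / (2 * ℓ) = 2 * π / ℓ * (π / 4) := by field_simp; ring
    _ < 2 * π / ℓ * (π / 2 - arctan (sinh (ℓ / 2))) := by gcongr; linarith
    _ = collarX ℓ := rfl

theorem collarX_lower_bound (ℓ : ℝ) (h0 : 0 < ℓ) (h1 : ℓ < 2 * Real.arsinh 1) :
    Real.pi ^ 2 / (4 * Real.arsinh 1) < collarX ℓ :=
  calc π ^ 2 / (4 * arsinh 1) < π ^ 2 / (2 * ℓ) :=
        div_lt_div_of_pos_left (by positivity) (by positivity) (by linarith)
    _ < collarX ℓ := pi_sq_div_two_mul_lt_collarX h0 h1
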